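/- Let Σ be a finite nonempty alphabet and let L ⊆ ℬ^Σ be a tree language with P_lim(L) = 0. If for every tree S ∈ ℬ^Σ there exists T ∈ L with S ⪯ T (i.e. L has no forbidden subtree), then L is not regular. -/

import Mathlib

open Filter Topology

namespace Sparse

inductive BTree (α : Type*) where
  | nil : BTree α
  | node : α → BTree α → BTree α → BTree α

namespace BTree

variable {α : Type*}

/-- The number of nodes of a binary tree. -/
def size : BTree α → ℕ
  | nil => 0
  | node _ l r => size l + size r + 1

/-- `Subtree S T` means `S = T`, or `T` is nonempty and `S` is a subtree of the left or
right subtree of the root of `T`. -/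
inductive Subtree : BTree α → BTree α → Prop where
  | refl (T : BTree α) : Subtree T T
  | left {S l r : BTree α} {a : α} : Subtree S l → Subtree S (node a l r)
  | right {S l r : BTree α} {a : α} : Subtree S r → Subtree S (node a l r)

end BTree

variable {α : Type*}

/-- A run of a tree automaton with transition relation `Δ` on a binary tree: the empty tree is
assigned `none` (i.e. `⊥`), and a nonempty tree with root label `a` and run values `ql`, `qr` on
the two subtrees is assigned a state `q` with `(ql, qr, a, q) ∈ Δ`. -/
inductive Run {Q : Type*} (Δ : Option Q → Option Q → α → Q → Prop) :
    BTree α → Option Q → Prop where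
  | nil : Run Δ BTree.nil none
  | node {a : α} {l r : BTree α} {ql qr : Option Q} {q : Q} :
      Run Δ l ql → Run Δ r qr → Δ ql qr a q → Run Δ (BTree.node a l r) (some q)

/-- A tree automaton with transitions `Δ` and accepting states `F` accepts `T` if some run
assigns `T` a state in `F`. -/
def TAccepts {Q : Type*} (Δ : Option Q → Option Q → α → Q → Prop) (F : Set Q)
    (T : BTree α) : Prop :=
  ∃ q ∈ F, Run Δ T (some q)

/-- A tree language is regular iff it is the set of trees accepted by some tree automaton
with finitely many states. -/
def RegularTreeLang (L : Set (BTree α)) : Prop :=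
  ∃ (Q : Type) (_ : Fintype Q) (Δ : Option Q → Option Q → α → Q → Prop) (F : Set Q),
    L = {T | TAccepts Δ F T}

/-- The relative number of `n`-node trees in `L`:
`|L ∩ ℬ^Σ_n| / (C_n ⬝ |Σ|^n)`, where `C_n` is the `n`-th Catalan number. -/
noncomputable def density [Fintype α] (L : Set (BTree α)) (n : ℕ) : ℝ :=
  (Nat.card {T : BTree α // T ∈ L ∧ T.size = n} : ℝ) /
    ((catalan n : ℝ) * (Fintype.card α : ℝ) ^ n)

/-- `L` has asymptotic density `c` if `density L n` tends to `c` as `n → ∞`. -/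
def HasDensity [Fintype α] (L : Set (BTree α)) (c : ℝ) : Prop :=
  Tendsto (density L) atTop (𝓝 c)

/-- The upper asymptotic density `P̄_lim(L) = limsup_n density L n`. -/
noncomputable def upperDensity [Fintype α] (L : Set (BTree α)) : ℝ :=
  limsup (density L) atTop

/-- `LT = {conc_a(S, T) : a ∈ Σ, S ∈ L}`. -/
def concL (L : Set (BTree α)) (T : BTree α) : Set (BTree α) :=
  {X | ∃ (a : α) (S : BTree α), S ∈ L ∧ X = BTree.node a S T}

/-- `LT⁻¹ = {S : ∃ a, conc_a(S, T) ∈ L}`. -/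
def quotR (L : Set (BTree α)) (T : BTree α) : Set (BTree α) :=
  {S | ∃ a : α, BTree.node a S T ∈ L}

/-- `T⁻¹L = {S : ∃ a, conc_a(T, S) ∈ L}`. -/
def quotL (T : BTree α) (L : Set (BTree α)) : Set (BTree α) :=
  {S | ∃ a : α, BTree.node a T S ∈ L}

/-- `L[T_k, …, T_1]⁻¹`, where the list is `[T_k, …, T_1]` (so the head is `T_k`):
`L[]⁻¹ = L` and `L[T_k,…,T_1]⁻¹ = (L[T_{k-1},…,T_1]⁻¹)T_k⁻¹ ∪ T_k⁻¹(L[T_{k-1},…,T_1]⁻¹)`. -/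
def quotIter (L : Set (BTree α)) : List (BTree α) → Set (BTree α)
  | [] => L
  | T :: Ts => quotR (quotIter L Ts) T ∪ quotL T (quotIter L Ts)

/-- A state `q` is reachable if some run of the automaton on some tree assigns `q` to the tree. -/
def TReachable {Q : Type*} (Δ : Option Q → Option Q → α → Q → Prop) (q : Q) : Prop :=
  ∃ T : BTree α, Run Δ T (some q)

/-- A set of states `V` is a sink if every transition involving a state of `V` as one of the
two child values leads into `V`. -/
def Sink {Q : Type*} (Δ : Option Q → Option Q → α → Q → Prop) (V : Set Q) : Prop :=
  ∀ q ∈ V, ∀ (q' : Option Q) (a : α) (q'' : Q),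
    (Δ (some q) q' a q'' ∨ Δ q' (some q) a q'') → q'' ∈ V

/-!
A tree automaton reading `C[S]`, for a context `C` with hole filled by `S`, only sees the run
value of `S`. If no subtree is forbidden, each tree `S` sits inside some accepted `C[S]`, so
its run value `q` comes with a context `C_q` such that `C_q[X] ∈ L` for every `X` with run
value `q`. Hence finitely many contexts push every tree of size `n` injectively into `L`, at
sizes `n + |C_q|`. As the number of trees of size `n + c` is at most `(4|Σ|)^c` times the
number of trees of size `n`, the densities of `L` at the sizes `n + |C_q|` cannot all tend to
`0`.
-/

inductive Ctx (α : Type*) where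
  | hole : Ctx α
  | left : α → Ctx α → BTree α → Ctx α
  | right : α → BTree α → Ctx α → Ctx α

namespace Ctx

instance : Inhabited (Ctx α) := ⟨hole⟩

def fill : Ctx α → BTree α → BTree α
  | hole, X => X
  | left a C r, X => BTree.node a (C.fill X) r
  | right a l C, X => BTree.node a l (C.fill X)

def size : Ctx α → ℕ
  | hole => 0
  | left _ C r => C.size + r.size + 1
  | right _ l C => l.size + C.size + 1

theorem size_fill (C : Ctx α) (X : BTree α) : (C.fill X).size = X.size + C.size := by
  induction C <;> simp only [fill, size, BTree.size, *] <;> ring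

theorem fill_injective (C : Ctx α) : Function.Injective C.fill := by
  induction C with
  | hole => exact fun _ _ h => h
  | left a C r ih => exact fun _ _ h => ih (BTree.node.inj h).2.1
  | right a l C ih => exact fun _ _ h => ih (BTree.node.inj h).2.2

theorem exists_run_of_run_fill {Q : Type*} {Δ : Option Q → Option Q → α → Q → Prop}
    (C : Ctx α) {S : BTree α} {p : Option Q} (h : Run Δ (C.fill S) p) :
    ∃ q, Run Δ S q ∧ ∀ X, Run Δ X q → Run Δ (C.fill X) p := by
  induction C generalizing p with
  | hole => exact ⟨p, h, fun _ hX => hX⟩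
  | left a C r ih =>
    cases h with
    | node hl hr hΔ =>
      obtain ⟨q, hq, hfill⟩ := ih hl
      exact ⟨q, hq, fun X hX => Run.node (hfill X hX) hr hΔ⟩
  | right a l C ih =>
    cases h with
    | node hl hr hΔ =>
      obtain ⟨q, hq, hfill⟩ := ih hr
      exact ⟨q, hq, fun X hX => Run.node hl (hfill X hX) hΔ⟩

end Ctx

theorem BTree.Subtree.exists_eq_fill {S T : BTree α} (h : BTree.Subtree S T) :
    ∃ C : Ctx α, T = C.fill S := by
  induction h with
  | refl => exact ⟨.hole, rfl⟩
  | left _ ih => obtain ⟨C, rfl⟩ := ih; exact ⟨.left _ C _, rfl⟩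
  | right _ ih => obtain ⟨C, rfl⟩ := ih; exact ⟨.right _ _ C, rfl⟩

namespace BTree

def shape : BTree α → BinaryTree Unit
  | nil => BinaryTree.nil
  | node _ l r => BinaryTree.node () (shape l) (shape r)

def labels : BTree α → List α
  | nil => []
  | node a l r => a :: (labels l ++ labels r)

def ofShape : BinaryTree Unit → List α → BTree α
  | .node _ l r, a :: ls =>
      node a (ofShape l (ls.take l.numNodes)) (ofShape r (ls.drop l.numNodes))
  | _, _ => nil

theorem length_labels (T : BTree α) : (labels T).length = T.size := by
  induction T with
  | nil => rfl
  | node a l r ihl ihr => simp only [labels, size, List.length_cons, List.length_append, ihl, ihr]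

theorem numNodes_shape (T : BTree α) : (shape T).numNodes = T.size := by
  induction T with
  | nil => rfl
  | node a l r ihl ihr => simp only [shape, size, BinaryTree.numNodes, ihl, ihr]

theorem ofShape_shape_labels (T : BTree α) : ofShape (shape T) (labels T) = T := by
  induction T with
  | nil => rfl
  | node a l r ihl ihr =>
    have hl : (shape l).numNodes = (labels l).length := by rw [numNodes_shape, length_labels]
    simp only [shape, labels, ofShape, hl, List.take_left, List.drop_left, ihl, ihr]

theorem shape_ofShape_and_labels_ofShape :
    ∀ (t : BinaryTree Unit) (ls : List α), ls.length = t.numNodes →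
      shape (ofShape t ls) = t ∧ labels (ofShape t ls) = ls
  | .nil, [], _ => ⟨rfl, rfl⟩
  | .node _ l r, a :: ls, h => by
    simp only [List.length_cons, BinaryTree.numNodes, Nat.add_right_cancel_iff] at h
    obtain ⟨hsl, hll⟩ := shape_ofShape_and_labels_ofShape l (ls.take l.numNodes)
      (by rw [List.length_take]; omega)
    obtain ⟨hsr, hlr⟩ := shape_ofShape_and_labels_ofShape r (ls.drop l.numNodes)
      (by rw [List.length_drop]; omega)
    exact ⟨by simp only [ofShape, shape, hsl, hsr], by
      simp only [ofShape, labels, hll, hlr, List.take_append_drop]⟩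

def sizeEqEquiv (n : ℕ) :
    {T : BTree α // T.size = n} ≃
      {t : BinaryTree Unit // t ∈ BinaryTree.treesOfNumNodesEq n} × List.Vector α n where
  toFun T := (⟨shape T.1, BinaryTree.mem_treesOfNumNodesEq.mpr ((numNodes_shape T.1).trans T.2)⟩,
    ⟨labels T.1, (length_labels T.1).trans T.2⟩)
  invFun p := ⟨ofShape p.1 p.2.1, by
    have hlen := p.2.2.trans (BinaryTree.mem_treesOfNumNodesEq.mp p.1.2).symm
    rw [← numNodes_shape, (shape_ofShape_and_labels_ofShape _ _ hlen).1,
      BinaryTree.mem_treesOfNumNodesEq.mp p.1.2]⟩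
  left_inv T := Subtype.ext (ofShape_shape_labels T.1)
  right_inv p := by
    have hlen := p.2.2.trans (BinaryTree.mem_treesOfNumNodesEq.mp p.1.2).symm
    obtain ⟨hs, hl⟩ := shape_ofShape_and_labels_ofShape _ _ hlen
    exact Prod.ext (Subtype.ext hs) (Subtype.ext hl)

instance [Finite α] (n : ℕ) : Finite {T : BTree α // T.size = n} :=
  have := Fintype.ofFinite α
  .of_equiv _ (sizeEqEquiv n).symm

instance [Finite α] (P : BTree α → Prop) (n : ℕ) : Finite {T : BTree α // P T ∧ T.size = n} :=
  .of_injective (fun T => (⟨T.1, T.2.2⟩ : {T : BTree α // T.size = n}))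
    fun _ _ h => Subtype.ext (Subtype.mk.inj h)

theorem card_sizeEq [Fintype α] (n : ℕ) :
    Nat.card {T : BTree α // T.size = n} = catalan n * Fintype.card α ^ n := by
  rw [Nat.card_congr (sizeEqEquiv n), Nat.card_prod, Nat.card_eq_fintype_card,
    Nat.card_eq_fintype_card, Fintype.card_coe, BinaryTree.treesOfNumNodesEq_card_eq_catalan,
    card_vector]

end BTree

theorem catalan_pos (n : ℕ) : 0 < catalan n :=
  Nat.pos_of_mul_pos_left ((succ_mul_catalan_eq_centralBinom n).symm ▸ Nat.centralBinom_pos n)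

theorem catalan_succ_le (n : ℕ) : catalan (n + 1) ≤ 4 * catalan n := by
  have key : (n + 2) * catalan (n + 1) = 2 * (2 * n + 1) * catalan n := by
    apply Nat.eq_of_mul_eq_mul_left (show 0 < n + 1 by omega)
    calc (n + 1) * ((n + 2) * catalan (n + 1))
        = (n + 1) * Nat.centralBinom (n + 1) := by rw [succ_mul_catalan_eq_centralBinom]
      _ = 2 * (2 * n + 1) * Nat.centralBinom n := Nat.succ_mul_centralBinom_succ n
      _ = (n + 1) * (2 * (2 * n + 1) * catalan n) := by
        rw [← succ_mul_catalan_eq_centralBinom]; ring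
  refine Nat.le_of_mul_le_mul_left ?_ (show 0 < n + 2 by omega)
  rw [key]
  calc 2 * (2 * n + 1) * catalan n ≤ 4 * (n + 2) * catalan n :=
        Nat.mul_le_mul_right _ (by omega)
    _ = (n + 2) * (4 * catalan n) := by ring

theorem catalan_mul_pow_add_le (A n c : ℕ) :
    catalan (n + c) * A ^ (n + c) ≤ (4 * A) ^ c * (catalan n * A ^ n) := by
  induction c with
  | zero => simp
  | succ c ih =>
    calc catalan (n + c + 1) * A ^ (n + c + 1)
        ≤ 4 * catalan (n + c) * A ^ (n + c + 1) := by gcongr; exact catalan_succ_le _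
      _ = (4 * A) * (catalan (n + c) * A ^ (n + c)) := by ring
      _ ≤ (4 * A) * ((4 * A) ^ c * (catalan n * A ^ n)) := by gcongr
      _ = (4 * A) ^ (c + 1) * (catalan n * A ^ n) := by ring

theorem card_mem_sizeEq_eq_density_mul [Fintype α] [Nonempty α] (L : Set (BTree α)) (m : ℕ) :
    (Nat.card {T : BTree α // T ∈ L ∧ T.size = m} : ℝ) =
      density L m * (catalan m * Fintype.card α ^ m) := by
  have : (catalan m * Fintype.card α ^ m : ℝ) ≠ 0 := by
    have := catalan_pos m; have := Fintype.card_pos (α := α); positivity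
  rw [density, div_mul_cancel₀ _ this]

theorem density_nonneg [Fintype α] (L : Set (BTree α)) (m : ℕ) : 0 ≤ density L m := by
  unfold density; positivity

section FillFamily

variable {ι : Type*} [Fintype ι] {L : Set (BTree α)} (C : ι → Ctx α)

theorem card_sizeEq_le_sum_card_fill [Finite α] (hC : ∀ X, ∃ i, (C i).fill X ∈ L) (n : ℕ) :
    Nat.card {T : BTree α // T.size = n} ≤
      ∑ i, Nat.card {T : BTree α // T ∈ L ∧ T.size = n + (C i).size} := by
  choose idx hidx using hC
  let f (X : {T : BTree α // T.size = n}) :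
      Σ i, {T : BTree α // T ∈ L ∧ T.size = n + (C i).size} :=
    ⟨idx X, (C (idx X)).fill X, hidx X, by rw [Ctx.size_fill, X.2]⟩
  have hf : f.Injective := fun X Y h => by
    have hi : idx X = idx Y := congrArg Sigma.fst h
    have hfill : (C (idx X)).fill X = (C (idx Y)).fill Y := congrArg (fun p => p.2.1) h
    rw [← hi] at hfill
    exact Subtype.ext ((C (idx X)).fill_injective hfill)
  calc Nat.card {T : BTree α // T.size = n} ≤ Nat.card (Σ i, _) :=
        Nat.card_le_card_of_injective f hf
    _ = _ := by simp only [Nat.card_sigma]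

theorem one_le_sum_density_fill [Fintype α] [Nonempty α] (hC : ∀ X, ∃ i, (C i).fill X ∈ L) (n : ℕ) :
    1 ≤ ∑ i, (4 * Fintype.card α : ℝ) ^ (C i).size * density L (n + (C i).size) := by
  set A := Fintype.card α
  have hpos : (0 : ℝ) < catalan n * A ^ n := by
    have := catalan_pos n; have := Fintype.card_pos (α := α); positivity
  have hbound (m c : ℕ) : (catalan (m + c) * A ^ (m + c) : ℝ) ≤
      (4 * A) ^ c * (catalan m * A ^ m) := by exact_mod_cast catalan_mul_pow_add_le A m c
  rw [← mul_le_mul_iff_of_pos_right hpos, one_mul, Finset.sum_mul]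
  calc (catalan n * A ^ n : ℝ) = Nat.card {T : BTree α // T.size = n} := by
        rw [BTree.card_sizeEq]; push_cast; rfl
    _ ≤ ∑ i, (Nat.card {T : BTree α // T ∈ L ∧ T.size = n + (C i).size} : ℝ) := by
        exact_mod_cast card_sizeEq_le_sum_card_fill C hC n
    _ ≤ ∑ i, (4 * A : ℝ) ^ (C i).size * density L (n + (C i).size) * (catalan n * A ^ n) := by
        gcongr with i
        have := mul_le_mul_of_nonneg_left (hbound n (C i).size) (density_nonneg L (n + (C i).size))
        rw [card_mem_sizeEq_eq_density_mul]
        linarith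

theorem not_hasDensity_zero_of_forall_fill_mem [Fintype α] [Nonempty α]
    (hC : ∀ X, ∃ i, (C i).fill X ∈ L) : ¬ HasDensity L 0 := fun h0 => by
  have hlim : Tendsto (fun n => ∑ i, (4 * Fintype.card α : ℝ) ^ (C i).size *
      density L (n + (C i).size)) atTop (𝓝 0) := by
    simpa using tendsto_finsetSum Finset.univ fun i _ =>
      (h0.comp (tendsto_add_atTop_nat (C i).size)).const_mul ((4 * Fintype.card α : ℝ) ^ (C i).size)
  exact absurd (ge_of_tendsto' hlim (one_le_sum_density_fill C hC)) (by norm_num)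

end FillFamily

theorem RegularTreeLang.exists_fill_mem {L : Set (BTree α)} (hL : RegularTreeLang L)
    (hno : ∀ S : BTree α, ∃ T ∈ L, BTree.Subtree S T) :
    ∃ (ι : Type) (_ : Fintype ι) (C : ι → Ctx α), ∀ X, ∃ i, (C i).fill X ∈ L := by
  obtain ⟨Q, _, Δ, F, rfl⟩ := hL
  have hprod (S : BTree α) :
      ∃ q, Run Δ S q ∧ ∃ C : Ctx α, ∀ X, Run Δ X q → TAccepts Δ F (C.fill X) := by
    obtain ⟨T, ⟨f, hf, hrun⟩, hST⟩ := hno S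
    obtain ⟨C, rfl⟩ := hST.exists_eq_fill
    obtain ⟨q, hq, hfill⟩ := C.exists_run_of_run_fill hrun
    exact ⟨q, hq, C, fun X hX => ⟨f, hf, hfill X hX⟩⟩
  choose! C hC using fun (q : Option Q) (h : ∃ C : Ctx α, ∀ X, Run Δ X q →
    TAccepts Δ F (C.fill X)) => h
  refine ⟨Option Q, inferInstance, C, fun X => ?_⟩
  obtain ⟨q, hq, hqC⟩ := hprod X
  exact ⟨q, hC q hqC X hq⟩

/-- A tree language of asymptotic density 0 without a forbidden subtree is
not regular. -/
theorem not_regular_of_sparse_without_forbidden_subtree {α : Type*} [Fintype α] [Nonempty α]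
    (L : Set (BTree α)) (h0 : HasDensity L 0)
    (hno : ∀ S : BTree α, ∃ T ∈ L, BTree.Subtree S T) :
    ¬ RegularTreeLang L := fun hL => by
  obtain ⟨ι, _, C, hC⟩ := hL.exists_fill_mem hno
  exact not_hasDensity_zero_of_forall_fill_mem C hC h0

end Sparse
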